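/- arXiv:1506.04712 — 2 statements merged into one kernel-verified Lean document; each statement's English description precedes it below -/
import Mathlib

section
/- Let n ≥ 1, let M be a symmetric negative semidefinite real n×n matrix, and fix an index k ∈ {1,…,n}. Define the symmetric (n+1)×(n+1) real matrix M' by: M'_{ij} = M_{ij} for all i,j ≤ n; M'_{i,n+1} = M'_{n+1,i} = 1 if i = k and 0 if i ≤ n, i ≠ k; and M'_{n+1,n+1} = 1. Then M' has exactly one positive eigenvalue, counted with multiplicity. -/
/-!
The quadratic form of `M'` restricts to that of `M`, hence is `≤ 0`, on the hyperplane
`x (Fin.last n) = 0`, and it takes the value `1` at the last basis vector. The latter forces a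
positive eigenvalue, since otherwise `-M'` would be positive semidefinite. Two orthonormal
eigenvectors with positive eigenvalues would span a plane on which the form is positive definite,
and that plane meets the hyperplane.
-/

open Matrix

namespace Matrix.IsHermitian
variable {ι : Type*} [Fintype ι] [DecidableEq ι] {A : Matrix ι ι ℝ} (hA : A.IsHermitian)

theorem dotProduct_eigenvectorBasis (i j : ι) :
    ⇑(hA.eigenvectorBasis i) ⬝ᵥ ⇑(hA.eigenvectorBasis j) = if i = j then 1 else 0 := by
  rw [← orthonormal_iff_ite.mp hA.eigenvectorBasis.orthonormal,
    EuclideanSpace.inner_eq_star_dotProduct, dotProduct_comm]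
  simp

theorem dotProduct_mulVec_smul_add_smul_eigenvectorBasis {i j : ι} (hij : i ≠ j) (a b : ℝ) :
    (a • ⇑(hA.eigenvectorBasis i) + b • ⇑(hA.eigenvectorBasis j)) ⬝ᵥ
        A *ᵥ (a • ⇑(hA.eigenvectorBasis i) + b • ⇑(hA.eigenvectorBasis j)) =
      a ^ 2 * hA.eigenvalues i + b ^ 2 * hA.eigenvalues j := by
  simp only [mulVec_add, mulVec_smul, hA.mulVec_eigenvectorBasis, add_dotProduct, dotProduct_add,
    smul_dotProduct, dotProduct_smul, hA.dotProduct_eigenvectorBasis, hij, hij.symm, if_true,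
    if_false, smul_eq_mul]
  ring

theorem exists_eigenvalues_pos {x : ι → ℝ} (hx : 0 < x ⬝ᵥ A *ᵥ x) : ∃ i, 0 < hA.eigenvalues i := by
  by_contra! h
  have hneg : (-A).PosSemidef := by
    rw [hA.spectral_theorem, ← map_neg, Unitary.conjStarAlgAut_apply,
      Unitary.isUnit_coe.posSemidef_star_right_conjugate_iff, diagonal_neg, posSemidef_diagonal_iff]
    simpa using h
  have := hneg.dotProduct_mulVec_nonneg x
  simp only [star_trivial, neg_mulVec, dotProduct_neg] at this
  linarith

theorem eq_of_eigenvalues_pos_of_nonpos_on_ker (f : (ι → ℝ) →ₗ[ℝ] ℝ)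
    (hf : ∀ x, f x = 0 → x ⬝ᵥ A *ᵥ x ≤ 0) {i j : ι}
    (hi : 0 < hA.eigenvalues i) (hj : 0 < hA.eigenvalues j) : i = j := by
  by_contra hij
  set v := ⇑(hA.eigenvectorBasis i)
  set w := ⇑(hA.eigenvectorBasis j)
  have hfv : f v = 0 := by
    have hx := hf (f w • v + (-f v) • w) (by simp [mul_comm])
    rw [hA.dotProduct_mulVec_smul_add_smul_eigenvectorBasis hij, neg_sq] at hx
    by_contra hne
    nlinarith [mul_nonneg (sq_nonneg (f w)) hi.le, mul_pos (sq_pos_of_ne_zero hne) hj]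
  have hv := hf v hfv
  rw [hA.mulVec_eigenvectorBasis, dotProduct_smul, hA.dotProduct_eigenvectorBasis, if_pos rfl,
    smul_eq_mul, mul_one] at hv
  exact hv.not_gt hi

theorem card_eigenvalues_pos_eq_one_of_nonpos_on_ker {e : ι → ℝ} (he : 0 < e ⬝ᵥ A *ᵥ e)
    (f : (ι → ℝ) →ₗ[ℝ] ℝ) (hf : ∀ x, f x = 0 → x ⬝ᵥ A *ᵥ x ≤ 0) :
    (Finset.univ.filter fun i => 0 < hA.eigenvalues i).card = 1 := by
  obtain ⟨i, hi⟩ := hA.exists_eigenvalues_pos he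
  rw [Finset.card_eq_one]
  exact ⟨i, Finset.eq_singleton_iff_unique_mem.mpr
    ⟨by simpa using hi, fun j hj =>
      hA.eq_of_eigenvalues_pos_of_nonpos_on_ker f hf (by simpa using hj) hi⟩⟩

end Matrix.IsHermitian

theorem Matrix.dotProduct_mulVec_eq_submatrix_castSucc {R : Type*} [CommSemiring R] {n : ℕ}
    (A : Matrix (Fin (n + 1)) (Fin (n + 1)) R) {x : Fin (n + 1) → R} (hx : x (Fin.last n) = 0) :
    x ⬝ᵥ A *ᵥ x =
      (x ∘ Fin.castSucc) ⬝ᵥ A.submatrix Fin.castSucc Fin.castSucc *ᵥ (x ∘ Fin.castSucc) := by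
  simp [dotProduct, mulVec, Fin.sum_univ_castSucc, hx]

theorem stmt_0_general (n : ℕ) (M : Matrix (Fin n) (Fin n) ℝ)
    (hsemi : ∀ x : Fin n → ℝ, dotProduct x (M.mulVec x) ≤ 0)
    (k : Fin n)
    (M' : Matrix (Fin (n + 1)) (Fin (n + 1)) ℝ)
    (hM'def : ∀ i j : Fin (n + 1),
      M' i j =
        if hi : (i : ℕ) < n then
          if hj : (j : ℕ) < n then M ⟨i, hi⟩ ⟨j, hj⟩
          else if (i : ℕ) = (k : ℕ) then 1 else 0
        else
          if (j : ℕ) < n then (if (j : ℕ) = (k : ℕ) then 1 else 0)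
          else 1)
    (hM' : M'.IsHermitian) :
    (Finset.univ.filter fun i => 0 < hM'.eigenvalues i).card = 1 := by
  have hcorner : M' (Fin.last n) (Fin.last n) = 1 := by simp [hM'def]
  have hblock : M'.submatrix Fin.castSucc Fin.castSucc = M := by
    ext i j
    simp [hM'def]
  refine hM'.card_eigenvalues_pos_eq_one_of_nonpos_on_ker (e := Pi.single (Fin.last n) 1)
    (by simp [hcorner]) (LinearMap.proj (Fin.last n)) fun x hx => ?_
  rw [M'.dotProduct_mulVec_eq_submatrix_castSucc hx, hblock]
  exact hsemi _

/-- Attaching a new simplex at a vertex with negative semidefinite local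
intersection matrix: if `M` is an `n × n` symmetric negative semidefinite real
matrix (`n ≥ 1`) and `M'` is the `(n+1) × (n+1)` symmetric matrix obtained from
`M` by adding a last row/column which is `1` in position `k` and `0` elsewhere,
with diagonal entry `1`, then `M'` has exactly one positive eigenvalue. -/
theorem stmt_0 (n : ℕ) (hn : 1 ≤ n) (M : Matrix (Fin n) (Fin n) ℝ)
    (hM : M.IsHermitian)
    (hsemi : ∀ x : Fin n → ℝ, dotProduct x (M.mulVec x) ≤ 0)
    (k : Fin n)
    (M' : Matrix (Fin (n + 1)) (Fin (n + 1)) ℝ)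
    (hM'def : ∀ i j : Fin (n + 1),
      M' i j =
        if hi : (i : ℕ) < n then
          if hj : (j : ℕ) < n then M ⟨i, hi⟩ ⟨j, hj⟩
          else if (i : ℕ) = (k : ℕ) then 1 else 0
        else
          if (j : ℕ) < n then (if (j : ℕ) = (k : ℕ) then 1 else 0)
          else 1)
    (hM' : M'.IsHermitian) :
    (Finset.univ.filter fun i => 0 < hM'.eigenvalues i).card = 1 :=
  stmt_0_general n M hsemi k M' hM'def hM'
end

section
/- Let n ≥ 1, let M be a symmetric real n×n matrix, and fix an index k ∈ {1,…,n}. Define the symmetric (n+1)×(n+1) real matrix M' by: M'_{ij} = M_{ij} for all i,j ≤ n with (i,j) ≠ (k,k); M'_{kk} = M_{kk} − 1; M'_{i,n+1} = M'_{n+1,i} = 1 if i = k and 0 if i ≤ n, i ≠ k; and M'_{n+1,n+1} = −1. Then M' has the same number of positive eigenvalues, counted with multiplicity, as M. -/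
/-!
By the spectral theorem and Sylvester's law of inertia, the number of positive eigenvalues of a
real symmetric matrix is the positive index of inertia `sigPos` of its quadratic form, i.e. the
largest dimension of a subspace on which the form is positive definite.

Writing a vector of `Fin (n + 1) → ℝ` as `(u, t)`, the quadratic form of `M'` is
`uᵀ M u - (t - u k)²`. Hence forgetting `t` does not decrease the form, and `u ↦ (u, u k)`
preserves it. A linear map that does not decrease a quadratic form is injective on every
positive-definite subspace and carries it to a positive-definite subspace, so the two maps give
the two inequalities between the indices of inertia.
-/

open Matrix Module Finset QuadraticMap QuadraticForm

theorem Matrix.toQuadraticForm'_apply {ι R : Type*} [Fintype ι] [DecidableEq ι] [CommRing R]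
    (A : Matrix ι ι R) (x : ι → R) :
    A.toQuadraticForm' x = x ⬝ᵥ A *ᵥ x := by
  simp [toQuadraticForm', toLinearMap₂'_apply']

theorem QuadraticForm.sigPos_le_sigPos_of_le_comp {𝕜 M M' : Type*} [Field 𝕜] [LinearOrder 𝕜]
    [AddCommGroup M] [AddCommGroup M'] [Module 𝕜 M] [Module 𝕜 M'] [FiniteDimensional 𝕜 M]
    [FiniteDimensional 𝕜 M'] {Q : QuadraticForm 𝕜 M} {Q' : QuadraticForm 𝕜 M'}
    (f : M →ₗ[𝕜] M') (hf : ∀ x, Q x ≤ Q' (f x)) :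
    sigPos Q ≤ sigPos Q' := by
  obtain ⟨V, hV_finrank, hV⟩ := exists_finrank_eq_sigPos_and_posDef Q
  have hfV : ∀ x ∈ V, x ≠ 0 → 0 < Q' (f x) := fun x hx hx0 =>
    (hV ⟨x, hx⟩ (by simpa using hx0)).trans_le (hf x)
  have hV_ker : Disjoint V (LinearMap.ker f) := by
    refine Submodule.disjoint_def.mpr fun x hx hx_ker => ?_
    by_contra hx0
    simpa [LinearMap.mem_ker.mp hx_ker] using hfV x hx hx0
  have hmap_finrank : finrank 𝕜 (V.map f) = finrank 𝕜 V := by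
    rw [← LinearMap.range_domRestrict]
    exact LinearMap.finrank_range_of_inj (LinearMap.injective_domRestrict_iff.mpr hV_ker)
  rw [← hV_finrank, ← hmap_finrank]
  refine le_sigPos_of_posDef Q' ?_
  rintro ⟨_, x, hx, rfl⟩ hfx
  refine hfV x hx ?_
  rintro rfl
  exact hfx (by simp)

namespace Matrix.IsHermitian

variable {ι : Type*} [Fintype ι] [DecidableEq ι] {A : Matrix ι ι ℝ}

theorem toQuadraticForm'_apply_eq_weightedSumSquares (hA : A.IsHermitian) (x : ι → ℝ) :
    A.toQuadraticForm' x =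
      weightedSumSquares ℝ hA.eigenvalues ((star hA.eigenvectorUnitary : Matrix ι ι ℝ) *ᵥ x) := by
  set U : Matrix ι ι ℝ := (hA.eigenvectorUnitary : Matrix ι ι ℝ)
  have hA_diag : A = U * diagonal hA.eigenvalues * star U := by
    simpa [U] using hA.spectral_theorem
  rw [toQuadraticForm'_apply, weightedSumSquares_apply]
  conv_lhs => rw [hA_diag]
  rw [← mulVec_mulVec, ← mulVec_mulVec, dotProduct_mulVec, star_eq_conjTranspose,
    conjTranspose_eq_transpose_of_trivial, ← mulVec_transpose]
  simp [dotProduct, mulVec_diagonal, mul_left_comm]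

theorem equivalent_weightedSumSquares (hA : A.IsHermitian) :
    A.toQuadraticForm'.Equivalent (weightedSumSquares ℝ hA.eigenvalues) :=
  ⟨{ UnitaryGroup.toLinearEquiv (star hA.eigenvectorUnitary) with
      map_app' := fun x => (hA.toQuadraticForm'_apply_eq_weightedSumSquares x).symm }⟩

theorem sigPos_toQuadraticForm' (hA : A.IsHermitian) :
    sigPos A.toQuadraticForm' = #{i | 0 < hA.eigenvalues i} := by
  rw [sigPos_of_equiv_weightedSumSquares hA.equivalent_weightedSumSquares,
    ← Set.ncard_coe_finset]
  simp

end Matrix.IsHermitian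

namespace Matrix

variable {R : Type*} [CommRing R] {n : ℕ}

/-- The block matrix `!![M - v vᵀ, v; vᵀ, -1]`; the paper's `M'` is `blowUp M (Pi.single k 1)`. -/
def blowUp (M : Matrix (Fin n) (Fin n) R) (v : Fin n → R) :
    Matrix (Fin (n + 1)) (Fin (n + 1)) R :=
  of fun i j => Fin.lastCases (Fin.lastCases (-1) v j)
    (fun i' => Fin.lastCases (v i') (fun j' => M i' j' - v i' * v j') j) i

theorem toQuadraticForm'_blowUp (M : Matrix (Fin n) (Fin n) R) (v : Fin n → R)
    (y : Fin (n + 1) → R) :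
    (blowUp M v).toQuadraticForm' y =
      M.toQuadraticForm' (Fin.init y) - (y (Fin.last n) - v ⬝ᵥ Fin.init y) ^ 2 := by
  simp only [toQuadraticForm'_apply, dotProduct, mulVec, Fin.sum_univ_castSucc, blowUp, of_apply,
    Fin.lastCases_castSucc, Fin.lastCases_last, Fin.init]
  set s := ∑ j, v j * y j.castSucc
  have hrow : ∀ i, ∑ j, (M i j - v i * v j) * y j.castSucc =
      ∑ j, M i j * y j.castSucc - v i * s := by
    intro i
    simp only [sub_mul, sum_sub_distrib, mul_sum, mul_assoc, s]
  have hs : ∑ i, y i.castSucc * v i = s := by simp only [s, mul_comm]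
  simp only [hrow, mul_add, mul_sub, sum_add_distrib, sum_sub_distrib, ← mul_assoc, ← sum_mul, hs]
  ring

theorem sigPos_toQuadraticForm'_blowUp {𝕜 : Type*} [Field 𝕜] [LinearOrder 𝕜]
    [IsStrictOrderedRing 𝕜] (M : Matrix (Fin n) (Fin n) 𝕜) (v : Fin n → 𝕜) :
    sigPos (blowUp M v).toQuadraticForm' = sigPos M.toQuadraticForm' := by
  let extend : (Fin n → 𝕜) →ₗ[𝕜] (Fin (n + 1) → 𝕜) :=
    { toFun := fun x => Fin.snoc x (v ⬝ᵥ x)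
      map_add' := fun x y => by
        ext i
        refine Fin.lastCases ?_ (fun i => ?_) i <;> simp [dotProduct_add]
      map_smul' := fun c x => by
        ext i
        refine Fin.lastCases ?_ (fun i => ?_) i <;> simp [dotProduct_smul] }
  refine le_antisymm (sigPos_le_sigPos_of_le_comp (LinearMap.funLeft 𝕜 𝕜 Fin.castSucc) ?_)
    (sigPos_le_sigPos_of_le_comp extend ?_)
  · intro y
    rw [toQuadraticForm'_blowUp]
    exact sub_le_self _ (sq_nonneg _)
  · intro x
    simp [extend, toQuadraticForm'_blowUp]

end Matrix

theorem stmt_1_general (n : ℕ) (M : Matrix (Fin n) (Fin n) ℝ)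
    (hM : M.IsHermitian)
    (k : Fin n)
    (M' : Matrix (Fin (n + 1)) (Fin (n + 1)) ℝ)
    (hM'def : ∀ i j : Fin (n + 1),
      M' i j =
        if hi : (i : ℕ) < n then
          if hj : (j : ℕ) < n then
            (if (i : ℕ) = (k : ℕ) ∧ (j : ℕ) = (k : ℕ) then M k k - 1
             else M ⟨i, hi⟩ ⟨j, hj⟩)
          else if (i : ℕ) = (k : ℕ) then 1 else 0
        else
          if (j : ℕ) < n then (if (j : ℕ) = (k : ℕ) then 1 else 0)
          else -1)
    (hM' : M'.IsHermitian) :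
    (Finset.univ.filter fun i => 0 < hM'.eigenvalues i).card =
      (Finset.univ.filter fun i => 0 < hM.eigenvalues i).card := by
  have hM'_eq : M' = M.blowUp (Pi.single k 1) := by
    ext i j
    rw [hM'def]
    refine Fin.lastCases ?_ (fun i => ?_) i <;> refine Fin.lastCases ?_ (fun j => ?_) j
    all_goals simp only [blowUp, of_apply, Fin.lastCases_last, Fin.lastCases_castSucc, Fin.val_last,
      Fin.val_castSucc, Fin.is_lt, lt_self_iff_false, ↓reduceDIte, ↓reduceIte, Fin.val_eq_val,
      Fin.eta, Pi.single_apply, mul_ite, mul_one, mul_zero]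
    by_cases hi : i = k <;> by_cases hj : j = k <;> simp [hi, hj]
  rw [← hM'.sigPos_toQuadraticForm', ← hM.sigPos_toQuadraticForm', hM'_eq,
    sigPos_toQuadraticForm'_blowUp]

/-- Attaching a new simplex onto an edge: if `M` is an `n × n` symmetric real
matrix (`n ≥ 1`) and `M'` is the `(n+1) × (n+1)` symmetric matrix obtained from
`M` by decreasing the `(k,k)` entry by `1` and adding a last row/column which is
`1` in position `k` and `0` elsewhere, with diagonal entry `-1`, then `M'` has
the same number of positive eigenvalues (with multiplicity) as `M`. -/
theorem stmt_1 (n : ℕ) (hn : 1 ≤ n) (M : Matrix (Fin n) (Fin n) ℝ)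
    (hM : M.IsHermitian)
    (k : Fin n)
    (M' : Matrix (Fin (n + 1)) (Fin (n + 1)) ℝ)
    (hM'def : ∀ i j : Fin (n + 1),
      M' i j =
        if hi : (i : ℕ) < n then
          if hj : (j : ℕ) < n then
            (if (i : ℕ) = (k : ℕ) ∧ (j : ℕ) = (k : ℕ) then M k k - 1
             else M ⟨i, hi⟩ ⟨j, hj⟩)
          else if (i : ℕ) = (k : ℕ) then 1 else 0
        else
          if (j : ℕ) < n then (if (j : ℕ) = (k : ℕ) then 1 else 0)
          else -1)
    (hM' : M'.IsHermitian) :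
    (Finset.univ.filter fun i => 0 < hM'.eigenvalues i).card =
      (Finset.univ.filter fun i => 0 < hM.eigenvalues i).card :=
  stmt_1_general n M hM k M' hM'def hM'
end
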